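/- arXiv:2003.02395 — 4 statements merged into one kernel-verified Lean document; each statement's English description precedes it below -/
import Mathlib

section
/- Let $0 < \beta_2 \leq 1$, $\epsilon > 0$, and let $(a_n)_{n \geq 1}$ be a non-negative real sequence. Define $b_n = \sum_{j=1}^n \beta_2^{n-j} a_j$. Then for all $N \geq 1$, $\sum_{j=1}^N \frac{a_j}{\epsilon + b_j} \leq \ln\left(1 + \frac{b_N}{\epsilon}\right) - N \ln(\beta_2)$. -/
/-!
Concavity of `log` bounds each ratio by a logarithmic increment,
`a / (c + a) ≤ log (c + a) - log c` with `c = ε + β₂ b_{n-1}`. These increments telescope up to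
the defect `log (ε + b_{n-1}) - log (ε + β₂ b_{n-1})` at each step, which is at most `-log β₂`
because `β₂ ≤ 1`.
-/

open Finset Real

lemma div_add_le_log_add_sub_log {c x : ℝ} (hc : 0 < c) (hx : 0 ≤ x) :
    x / (c + x) ≤ log (c + x) - log c := by
  have hcx : 0 < c + x := by linarith
  calc x / (c + x) = 1 - ((c + x) / c)⁻¹ := by field_simp; ring
    _ ≤ log ((c + x) / c) := one_sub_inv_le_log_of_pos (by positivity)
    _ = log (c + x) - log c := log_div hcx.ne' hc.ne'

lemma log_add_le_log_add_mul_sub_log {β ε y : ℝ} (hβ0 : 0 < β) (hβ1 : β ≤ 1) (hε : 0 < ε)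
    (hy : 0 ≤ y) : log (ε + y) ≤ log (ε + β * y) - log β := by
  have hmul : β * (ε + y) ≤ ε + β * y := by nlinarith
  have := log_le_log (by positivity) hmul
  rw [log_mul hβ0.ne' (by positivity)] at this
  linarith

lemma sum_Icc_pow_mul_succ {R : Type*} [CommSemiring R] (β : R) (a : ℕ → R) (n : ℕ) :
    ∑ j ∈ Icc 1 (n + 1), β ^ (n + 1 - j) * a j
      = β * ∑ j ∈ Icc 1 n, β ^ (n - j) * a j + a (n + 1) := by
  rw [sum_Icc_succ_top (by omega), Nat.sub_self, pow_zero, one_mul, mul_sum]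
  congr 1
  refine sum_congr rfl fun j hj ↦ ?_
  rw [← mul_assoc, ← pow_succ', Nat.sub_add_comm (mem_Icc.mp hj).2]

lemma sum_div_le_log_sub_log_of_rec {β ε : ℝ} (hβ0 : 0 < β) (hβ1 : β ≤ 1) (hε : 0 < ε)
    {a b : ℕ → ℝ} (ha : ∀ n, 0 ≤ a (n + 1)) (hb : ∀ n, 0 ≤ b n)
    (hrec : ∀ n, b (n + 1) = β * b n + a (n + 1)) (n : ℕ) :
    ∑ j ∈ Icc 1 n, a j / (ε + b j) ≤ log (ε + b n) - log ε - n * log β := by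
  induction n with
  | zero => simpa using log_le_log hε (le_add_of_nonneg_right (hb 0))
  | succ n ih =>
    have hden : ε + b (n + 1) = (ε + β * b n) + a (n + 1) := by rw [hrec]; ring
    have hratio : a (n + 1) / (ε + b (n + 1)) ≤ log (ε + b (n + 1)) - log (ε + β * b n) := by
      rw [hden]
      exact div_add_le_log_add_sub_log (by have := hb n; positivity) (ha n)
    have hdefect := log_add_le_log_add_mul_sub_log hβ0 hβ1 hε (hb n)
    rw [sum_Icc_succ_top (by omega)]
    push_cast
    linarith

theorem sum_ratio_bound_general (β₂ ε : ℝ) (hβ₂0 : 0 < β₂) (hβ₂1 : β₂ ≤ 1) (hε : 0 < ε)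
    (a : ℕ → ℝ) (ha : ∀ n, 1 ≤ n → 0 ≤ a n)
    (b : ℕ → ℝ) (hb : ∀ n, b n = ∑ j ∈ Finset.Icc 1 n, β₂ ^ (n - j) * a j)
    (N : ℕ) :
    ∑ j ∈ Finset.Icc 1 N, a j / (ε + b j)
      ≤ Real.log (1 + b N / ε) - N * Real.log β₂ := by
  have hb_nonneg : ∀ n, 0 ≤ b n := fun n ↦ by
    rw [hb]
    exact sum_nonneg fun j hj ↦ mul_nonneg (by positivity) (ha j (mem_Icc.mp hj).1)
  have hrec : ∀ n, b (n + 1) = β₂ * b n + a (n + 1) := fun n ↦ by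
    rw [hb, hb, sum_Icc_pow_mul_succ]
  have hlog : log (1 + b N / ε) = log (ε + b N) - log ε := by
    rw [← log_div (by linarith [hb_nonneg N]) hε.ne', add_div, div_self hε.ne']
  rw [hlog]
  exact sum_div_le_log_sub_log_of_rec hβ₂0 hβ₂1 hε (fun n ↦ ha (n + 1) (by omega))
    hb_nonneg hrec N

/-- Sum-of-ratios lemma: the sum of ratios where each denominator is `ε` plus an
exponentially decayed sum of past numerators is bounded by a logarithmic term. -/
theorem sum_ratio_bound (β₂ ε : ℝ) (hβ₂0 : 0 < β₂) (hβ₂1 : β₂ ≤ 1) (hε : 0 < ε)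
    (a : ℕ → ℝ) (ha : ∀ n, 1 ≤ n → 0 ≤ a n)
    (b : ℕ → ℝ) (hb : ∀ n, b n = ∑ j ∈ Finset.Icc 1 n, β₂ ^ (n - j) * a j)
    (N : ℕ) (hN : 1 ≤ N) :
    ∑ j ∈ Finset.Icc 1 N, a j / (ε + b j)
      ≤ Real.log (1 + b N / ε) - N * Real.log β₂ :=
  sum_ratio_bound_general β₂ ε hβ₂0 hβ₂1 hε a ha b hb N
end

section
/- Let $0 < \beta_2 \leq 1$, $0 \leq \beta_1 < \beta_2$, $\epsilon > 0$, and let $(a_n)_{n \geq 1}$ be a real sequence. Define $b_n = \sum_{j=1}^n \beta_2^{n-j} a_j^2$ and $c_n = \sum_{j=1}^n \beta_1^{n-j} a_j$. Then for all $n \geq 1$, $\sum_{j=1}^n \frac{c_j^2}{\epsilon + b_j} \leq \frac{1}{(1-\beta_1)(1-\beta_1/\beta_2)}\left(\ln\left(1 + \frac{b_n}{\epsilon}\right) - n \ln(\beta_2)\right)$. -/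
/-!
Cauchy–Schwarz with the weights `β₁^(j-l)`, of total mass below `(1-β₁)⁻¹`, gives
`c_j² ≤ (1-β₁)⁻¹ ∑_l β₁^(j-l) a_l²`, and `ε + b_j ≥ β₂^(j-l) (ε + b_l)`, so
`c_j²/(ε+b_j) ≤ (1-β₁)⁻¹ ∑_l (β₁/β₂)^(j-l) a_l²/(ε+b_l)`. Summing over `j` and then the geometric
series in `β₁/β₂` reduces the claim to the case `β₁ = 0`, `∑_j a_j²/(ε+b_j) ≤ log(1 + b_n/ε) - n log β₂`,
which telescopes from `1 - t/u ≤ log(u/t)` with `u = ε + b_j` and `t = β₂ (ε + b_{j-1})`.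
-/

open Finset Real

lemma sum_pow_le_of_injOn {ι : Type*} {s : Finset ι} {f : ι → ℕ} (hf : Set.InjOn f s) {r : ℝ}
    (hr0 : 0 ≤ r) (hr1 : r < 1) : ∑ i ∈ s, r ^ f i ≤ (1 - r)⁻¹ := by
  classical
  rw [← sum_image hf, ← tsum_geometric_of_lt_one hr0 hr1]
  exact (summable_geometric_of_lt_one hr0 hr1).sum_le_tsum _ fun i _ => pow_nonneg hr0 i

noncomputable def expDecaySum (β : ℝ) (x : ℕ → ℝ) (n : ℕ) : ℝ :=
  ∑ j ∈ Icc 1 n, β ^ (n - j) * x j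

section ExpDecaySum

variable {β : ℝ} {x : ℕ → ℝ}

@[simp]
lemma expDecaySum_zero : expDecaySum β x 0 = 0 := by
  simp [expDecaySum]

lemma expDecaySum_succ (n : ℕ) :
    expDecaySum β x (n + 1) = β * expDecaySum β x n + x (n + 1) := by
  rw [expDecaySum, expDecaySum, sum_Icc_succ_top (by omega), mul_sum, Nat.sub_self, pow_zero,
    one_mul]
  congr 1
  refine sum_congr rfl fun j hj => ?_
  rw [← mul_assoc, ← pow_succ', Nat.sub_add_comm (mem_Icc.1 hj).2]

lemma expDecaySum_nonneg (hβ : 0 ≤ β) (hx : ∀ j, 0 ≤ x j) (n : ℕ) : 0 ≤ expDecaySum β x n :=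
  sum_nonneg fun j _ => mul_nonneg (pow_nonneg hβ _) (hx j)

lemma sq_expDecaySum_le (hβ0 : 0 ≤ β) (hβ1 : β < 1) (n : ℕ) :
    expDecaySum β x n ^ 2 ≤ (1 - β)⁻¹ * expDecaySum β (fun j => x j ^ 2) n := by
  have hinj : Set.InjOn (fun j => n - j) (Icc 1 n : Set ℕ) := fun i hi j hj h => by
    simp only [coe_Icc, Set.mem_Icc] at hi hj h
    omega
  calc expDecaySum β x n ^ 2
      ≤ (∑ j ∈ Icc 1 n, β ^ (n - j)) * expDecaySum β (fun j => x j ^ 2) n :=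
        sum_sq_le_sum_mul_sum_of_sq_le_mul _ (fun j _ => pow_nonneg hβ0 _)
          (fun j _ => mul_nonneg (pow_nonneg hβ0 _) (sq_nonneg _)) fun j _ => le_of_eq (by ring)
    _ ≤ (1 - β)⁻¹ * expDecaySum β (fun j => x j ^ 2) n :=
        mul_le_mul_of_nonneg_right (sum_pow_le_of_injOn hinj hβ0 hβ1)
          (expDecaySum_nonneg hβ0 (fun j => sq_nonneg _) n)

lemma pow_mul_add_expDecaySum_le {ε : ℝ} (hε : 0 ≤ ε) (hβ0 : 0 ≤ β) (hβ1 : β ≤ 1)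
    (hx : ∀ j, 0 ≤ x j) {l n : ℕ} (hln : l ≤ n) :
    β ^ (n - l) * (ε + expDecaySum β x l) ≤ ε + expDecaySum β x n := by
  induction n, hln using Nat.le_induction with
  | base => simp
  | succ n hln ih =>
    rw [Nat.sub_add_comm hln, pow_succ', mul_assoc, expDecaySum_succ]
    calc β * (β ^ (n - l) * (ε + expDecaySum β x l)) ≤ β * (ε + expDecaySum β x n) :=
          mul_le_mul_of_nonneg_left ih hβ0
      _ ≤ ε + (β * expDecaySum β x n + x (n + 1)) := by nlinarith [hx (n + 1)]

lemma sum_expDecaySum_le {u : ℕ → ℝ} (hβ0 : 0 ≤ β) (hβ1 : β < 1) (hu : ∀ j, 0 ≤ u j) (n : ℕ) :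
    ∑ j ∈ Icc 1 n, expDecaySum β u j ≤ (1 - β)⁻¹ * ∑ l ∈ Icc 1 n, u l := by
  have hswap : ∑ j ∈ Icc 1 n, expDecaySum β u j
      = ∑ l ∈ Icc 1 n, (∑ j ∈ Icc l n, β ^ (j - l)) * u l := by
    simp only [expDecaySum, sum_mul]
    exact sum_comm' fun j l => by simp only [mem_Icc]; omega
  rw [hswap, mul_sum]
  refine sum_le_sum fun l _ => mul_le_mul_of_nonneg_right ?_ (hu l)
  refine sum_pow_le_of_injOn (fun i hi j hj h => ?_) hβ0 hβ1
  simp only [coe_Icc, Set.mem_Icc] at hi hj h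
  omega

end ExpDecaySum

lemma log_one_add_div {ε b : ℝ} (hε : 0 < ε) (hb : 0 ≤ b) :
    log (1 + b / ε) = log (ε + b) - log ε := by
  rw [← log_div (by positivity) hε.ne', add_div, div_self hε.ne']

lemma sub_div_le_log_div {t u : ℝ} (ht : 0 < t) (htu : t ≤ u) : (u - t) / u ≤ log (u / t) := by
  have := one_sub_inv_le_log_of_pos (div_pos (ht.trans_le htu) ht)
  rwa [inv_div, ← div_self (ht.trans_le htu).ne', ← sub_div] at this

lemma sq_div_le_log_sub_log {ε s β : ℝ} (hε : 0 < ε) (hs : 0 ≤ s) (hβ0 : 0 < β) (hβ1 : β ≤ 1)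
    (y : ℝ) :
    y ^ 2 / (ε + (β * s + y ^ 2)) ≤ log (ε + (β * s + y ^ 2)) - log (ε + s) - log β := by
  have ht : 0 < β * (ε + s) := by positivity
  have hgap : β * (ε + s) + y ^ 2 ≤ ε + (β * s + y ^ 2) := by nlinarith
  calc y ^ 2 / (ε + (β * s + y ^ 2))
      ≤ (ε + (β * s + y ^ 2) - β * (ε + s)) / (ε + (β * s + y ^ 2)) := by
        gcongr
        linarith
    _ ≤ log ((ε + (β * s + y ^ 2)) / (β * (ε + s))) :=
        sub_div_le_log_div ht (by linarith [sq_nonneg y])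
    _ = log (ε + (β * s + y ^ 2)) - log (ε + s) - log β := by
        rw [log_div (by positivity) ht.ne', log_mul hβ0.ne' (by positivity)]
        ring

lemma sum_sq_div_add_expDecaySum_le {ε β : ℝ} (hε : 0 < ε) (hβ0 : 0 < β) (hβ1 : β ≤ 1)
    (x : ℕ → ℝ) (n : ℕ) :
    ∑ j ∈ Icc 1 n, x j ^ 2 / (ε + expDecaySum β (fun l => x l ^ 2) j)
      ≤ log (1 + expDecaySum β (fun l => x l ^ 2) n / ε) - n * log β := by
  have hb := expDecaySum_nonneg hβ0.le (fun l => sq_nonneg (x l))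
  induction n with
  | zero => simp
  | succ n ih =>
    rw [log_one_add_div hε (hb n)] at ih
    have hstep := sq_div_le_log_sub_log hε (hb n) hβ0 hβ1 (x (n + 1))
    rw [← expDecaySum_succ] at hstep
    rw [sum_Icc_succ_top (by omega), log_one_add_div hε (hb _)]
    push_cast
    linarith

lemma expDecaySum_sq_div_le {ε β₁ β₂ : ℝ} (hε : 0 < ε) (hβ₁0 : 0 ≤ β₁) (hβ₂0 : 0 < β₂)
    (hβ₂1 : β₂ ≤ 1) (x : ℕ → ℝ) (n : ℕ) :
    expDecaySum β₁ (fun l => x l ^ 2) n / (ε + expDecaySum β₂ (fun l => x l ^ 2) n)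
      ≤ expDecaySum (β₁ / β₂) (fun l => x l ^ 2 / (ε + expDecaySum β₂ (fun l => x l ^ 2) l)) n := by
  have hb := expDecaySum_nonneg hβ₂0.le (fun l => sq_nonneg (x l))
  rw [expDecaySum.eq_1 β₁, expDecaySum.eq_1 (β₁ / β₂), sum_div]
  refine sum_le_sum fun l hl => ?_
  rw [div_pow, div_mul_div_comm]
  gcongr
  · exact mul_pos (pow_pos hβ₂0 _) (by linarith [hb l])
  · exact pow_mul_add_expDecaySum_le hε.le hβ₂0.le hβ₂1 (fun l => sq_nonneg (x l)) (mem_Icc.1 hl).2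

lemma sq_expDecaySum_div_le {ε β₁ β₂ : ℝ} (hε : 0 < ε) (hβ₁0 : 0 ≤ β₁) (hβ₁2 : β₁ < β₂)
    (hβ₂1 : β₂ ≤ 1) (x : ℕ → ℝ) (n : ℕ) :
    expDecaySum β₁ x n ^ 2 / (ε + expDecaySum β₂ (fun l => x l ^ 2) n)
      ≤ (1 - β₁)⁻¹ *
        expDecaySum (β₁ / β₂) (fun l => x l ^ 2 / (ε + expDecaySum β₂ (fun l => x l ^ 2) l)) n := by
  have hβ₂0 : 0 < β₂ := hβ₁0.trans_lt hβ₁2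
  have hβ₁1 : β₁ < 1 := hβ₁2.trans_le hβ₂1
  have hb := expDecaySum_nonneg hβ₂0.le (fun l => sq_nonneg (x l)) n
  calc expDecaySum β₁ x n ^ 2 / (ε + expDecaySum β₂ (fun l => x l ^ 2) n)
      ≤ (1 - β₁)⁻¹ * expDecaySum β₁ (fun l => x l ^ 2) n
          / (ε + expDecaySum β₂ (fun l => x l ^ 2) n) := by
        gcongr
        exact sq_expDecaySum_le hβ₁0 hβ₁1 n
    _ ≤ _ := by
        rw [mul_div_assoc]
        gcongr
        exact expDecaySum_sq_div_le hε hβ₁0 hβ₂0 hβ₂1 x n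

theorem sum_ratio_momentum_bound_general (β₁ β₂ ε : ℝ) (hβ₂0 : 0 < β₂) (hβ₂1 : β₂ ≤ 1)
    (hβ₁0 : 0 ≤ β₁) (hβ₁2 : β₁ < β₂) (hε : 0 < ε)
    (a : ℕ → ℝ)
    (b : ℕ → ℝ) (hb : ∀ n, b n = ∑ j ∈ Finset.Icc 1 n, β₂ ^ (n - j) * a j ^ 2)
    (c : ℕ → ℝ) (hc : ∀ n, c n = ∑ j ∈ Finset.Icc 1 n, β₁ ^ (n - j) * a j)
    (n : ℕ) :
    ∑ j ∈ Finset.Icc 1 n, c j ^ 2 / (ε + b j)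
      ≤ 1 / ((1 - β₁) * (1 - β₁ / β₂)) *
        (Real.log (1 + b n / ε) - n * Real.log β₂) := by
  obtain rfl : b = expDecaySum β₂ (fun j => a j ^ 2) := funext hb
  obtain rfl : c = expDecaySum β₁ a := funext hc
  have hβ₁1 : β₁ < 1 := hβ₁2.trans_le hβ₂1
  have hr0 : 0 ≤ β₁ / β₂ := div_nonneg hβ₁0 hβ₂0.le
  have hr1 : β₁ / β₂ < 1 := (div_lt_one hβ₂0).2 hβ₁2
  set u := fun l => a l ^ 2 / (ε + expDecaySum β₂ (fun j => a j ^ 2) l)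
  have hu : ∀ l, 0 ≤ u l := fun l => div_nonneg (sq_nonneg _)
    (by linarith [expDecaySum_nonneg hβ₂0.le (fun j => sq_nonneg (a j)) l])
  calc ∑ j ∈ Icc 1 n, expDecaySum β₁ a j ^ 2 / (ε + expDecaySum β₂ (fun j => a j ^ 2) j)
      ≤ ∑ j ∈ Icc 1 n, (1 - β₁)⁻¹ * expDecaySum (β₁ / β₂) u j :=
        sum_le_sum fun j _ => sq_expDecaySum_div_le hε hβ₁0 hβ₁2 hβ₂1 a j
    _ = (1 - β₁)⁻¹ * ∑ j ∈ Icc 1 n, expDecaySum (β₁ / β₂) u j := (mul_sum ..).symm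
    _ ≤ (1 - β₁)⁻¹ * ((1 - β₁ / β₂)⁻¹ * ∑ l ∈ Icc 1 n, u l) := by
        gcongr
        exact sum_expDecaySum_le hr0 hr1 hu n
    _ ≤ (1 - β₁)⁻¹ * ((1 - β₁ / β₂)⁻¹ *
          (log (1 + expDecaySum β₂ (fun j => a j ^ 2) n / ε) - n * log β₂)) := by
        gcongr
        exact sum_sq_div_add_expDecaySum_le hε hβ₂0 hβ₂1 a n
    _ = _ := by rw [one_div, mul_inv]; ring

/-- Sum of ratios of the square of a decayed sum and a decayed sum of squares. -/
theorem sum_ratio_momentum_bound (β₁ β₂ ε : ℝ) (hβ₂0 : 0 < β₂) (hβ₂1 : β₂ ≤ 1)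
    (hβ₁0 : 0 ≤ β₁) (hβ₁2 : β₁ < β₂) (hε : 0 < ε)
    (a : ℕ → ℝ)
    (b : ℕ → ℝ) (hb : ∀ n, b n = ∑ j ∈ Finset.Icc 1 n, β₂ ^ (n - j) * a j ^ 2)
    (c : ℕ → ℝ) (hc : ∀ n, c n = ∑ j ∈ Finset.Icc 1 n, β₁ ^ (n - j) * a j)
    (n : ℕ) (hn : 1 ≤ n) :
    ∑ j ∈ Finset.Icc 1 n, c j ^ 2 / (ε + b j)
      ≤ 1 / ((1 - β₁) * (1 - β₁ / β₂)) *
        (Real.log (1 + b n / ε) - n * Real.log β₂) :=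
  sum_ratio_momentum_bound_general β₁ β₂ ε hβ₂0 hβ₂1 hβ₁0 hβ₁2 hε a b hb c hc n
end

section
/- For any $0 < a < 1$ and any $Q \in \mathbb{N}$, $\sum_{q=0}^{Q-1} a^q \sqrt{q+1} \leq \frac{1}{1-a}\left(1 + \frac{\sqrt{\pi}}{2\sqrt{-\ln(a)}}\right) \leq \frac{2}{(1-a)^{3/2}}$. -/
open MeasureTheory Set

/-- Sum of a geometric term times a square root. -/
theorem sum_geom_sqrt_bound (a : ℝ) (ha0 : 0 < a) (ha1 : a < 1) (Q : ℕ) :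
    (∑ q ∈ Finset.range Q, a ^ q * Real.sqrt (q + 1)
        ≤ 1 / (1 - a) * (1 + Real.sqrt Real.pi / (2 * Real.sqrt (-Real.log a)))) ∧
    (1 / (1 - a) * (1 + Real.sqrt Real.pi / (2 * Real.sqrt (-Real.log a)))
        ≤ 2 / (1 - a) ^ ((3 : ℝ) / 2)) := by
  have h1a : 0 < 1 - a := by linarith
  set b : ℝ := -Real.log a with hbdef
  have hb : 0 < b := by
    have := Real.log_neg ha0 ha1
    simp only [hbdef]; linarith
  have hsb : 0 < Real.sqrt b := Real.sqrt_pos.2 hb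
  set f : ℝ → ℝ := fun x => x ^ ((1:ℝ)/2 - 1) * Real.exp (-(b * x)) with hfdef
  -- integrability on Ioi 0
  have hIoi : IntegrableOn f (Ioi 0) volume := by
    have := integrableOn_rpow_mul_exp_neg_mul_rpow
      (show (-1:ℝ) < (1:ℝ)/2 - 1 by norm_num) (by norm_num : (0:ℝ) < 1) hb
    refine this.congr_fun (fun x hx => ?_) measurableSet_Ioi
    simp [hfdef, Real.rpow_one, neg_mul]
  have hInt : ∀ c d : ℝ, 0 ≤ c → 0 ≤ d → IntervalIntegrable f volume c d := by
    intro c d hc hd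
    rw [intervalIntegrable_iff]
    refine hIoi.mono_set ?_
    intro x hx
    rcases hx with ⟨h1, _⟩
    have : min c d < x := h1
    exact lt_of_le_of_lt (le_min hc hd) this
  -- the Gamma integral value
  have hI : ∫ x in Ioi (0:ℝ), f x = Real.sqrt Real.pi / Real.sqrt b := by
    have := Real.integral_rpow_mul_exp_neg_mul_Ioi
      (show (0:ℝ) < 1/2 by norm_num) hb
    rw [hfdef]
    simp only [neg_mul] at this ⊢
    rw [this, Real.Gamma_one_half_eq, ← Real.sqrt_eq_rpow, one_div, Real.sqrt_inv]
    ring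
  -- nonnegativity of f
  have hfnn : ∀ x : ℝ, 0 ≤ x → 0 ≤ f x := by
    intro x hx
    exact mul_nonneg (Real.rpow_nonneg hx _) (Real.exp_pos _).le
  -- termwise bound for q = i+1
  have hterm : ∀ i : ℕ, a ^ (i+1) * (Real.sqrt ((i:ℝ)+1+1) - Real.sqrt ((i:ℝ)+1))
      ≤ (∫ x in (i:ℝ)..((i:ℝ)+1), f x) / 2 := by
    intro i
    have hi0 : (0:ℝ) ≤ (i:ℝ) := Nat.cast_nonneg i
    have hi1 : (0:ℝ) < (i:ℝ)+1 := by linarith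
    have hu : 0 < Real.sqrt ((i:ℝ)+1) := Real.sqrt_pos.2 hi1
    -- sqrt difference bound
    have hdiff : Real.sqrt ((i:ℝ)+1+1) - Real.sqrt ((i:ℝ)+1) ≤ 1 / (2 * Real.sqrt ((i:ℝ)+1)) := by
      rw [le_div_iff₀ (by positivity : (0:ℝ) < 2 * Real.sqrt ((i:ℝ)+1))]
      nlinarith [Real.sq_sqrt (show (0:ℝ) ≤ (i:ℝ)+1+1 by linarith),
        Real.sq_sqrt hi1.le, Real.sqrt_nonneg ((i:ℝ)+1+1),
        sq_nonneg (Real.sqrt ((i:ℝ)+1+1) - Real.sqrt ((i:ℝ)+1))]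
    -- a^(i+1) as exp
    have hpow : a ^ (i+1) = Real.exp (-(b * ((i:ℝ)+1))) := by
      rw [← Real.exp_log ha0, ← Real.exp_nat_mul]
      congr 1
      simp [hbdef]
      push_cast
      ring
    -- value of f at i+1
    have hfval : f ((i:ℝ)+1) = Real.exp (-(b * ((i:ℝ)+1))) / Real.sqrt ((i:ℝ)+1) := by
      rw [hfdef]
      simp only
      rw [show (1:ℝ)/2 - 1 = -(1/2) by norm_num, Real.rpow_neg hi1.le,
        ← Real.sqrt_eq_rpow]
      ring
    -- f (i+1) ≤ ∫
    have hmono : f ((i:ℝ)+1) ≤ ∫ x in (i:ℝ)..((i:ℝ)+1), f x := by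
      have hconst : IntervalIntegrable (fun _ : ℝ => f ((i:ℝ)+1)) volume (i:ℝ) ((i:ℝ)+1) :=
        intervalIntegrable_const
      have hfint : IntervalIntegrable f volume (i:ℝ) ((i:ℝ)+1) := hInt _ _ hi0 hi1.le
      have hae : (fun _ : ℝ => f ((i:ℝ)+1)) ≤ᵐ[volume.restrict (Icc (i:ℝ) ((i:ℝ)+1))] f := by
        have h0 : ∀ᵐ x : ℝ ∂(volume.restrict (Icc (i:ℝ) ((i:ℝ)+1))), x ≠ 0 := by
          refine ae_restrict_of_ae ?_
          rw [ae_iff]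
          simp only [not_not]
          have : {x : ℝ | x = 0} = {(0:ℝ)} := by ext x; simp
          rw [this]
          exact measure_singleton 0
        filter_upwards [h0, ae_restrict_mem measurableSet_Icc] with x hx0 hx
        rcases hx with ⟨hx1, hx2⟩
        have hxpos : 0 < x := lt_of_le_of_ne (le_trans hi0 hx1) (Ne.symm hx0)
        rw [hfdef]
        simp only
        refine mul_le_mul ?_ ?_ (Real.exp_pos _).le (Real.rpow_nonneg hxpos.le _)
        · exact Real.rpow_le_rpow_of_nonpos hxpos (by linarith) (by norm_num)
        · exact Real.exp_le_exp.2 (by nlinarith)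
      have := intervalIntegral.integral_mono_ae_restrict (by linarith : (i:ℝ) ≤ (i:ℝ)+1)
        hconst hfint hae
      rwa [intervalIntegral.integral_const, smul_eq_mul, show ((i:ℝ)+1-(i:ℝ)) = 1 by ring,
        one_mul] at this
    calc a ^ (i+1) * (Real.sqrt ((i:ℝ)+1+1) - Real.sqrt ((i:ℝ)+1))
        ≤ a ^ (i+1) * (1 / (2 * Real.sqrt ((i:ℝ)+1))) :=
          mul_le_mul_of_nonneg_left hdiff (pow_nonneg ha0.le _)
      _ = f ((i:ℝ)+1) / 2 := by rw [hpow, hfval]; field_simp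
      _ ≤ (∫ x in (i:ℝ)..((i:ℝ)+1), f x) / 2 := by linarith
  -- the partial sum of differences
  have habel : ∀ N : ℕ, ∑ q ∈ Finset.range N,
      a ^ q * (Real.sqrt ((q:ℝ)+1) - Real.sqrt (q:ℝ))
      = (1 - a) * (∑ q ∈ Finset.range N, a ^ q * Real.sqrt ((q:ℝ)+1))
        + a ^ N * Real.sqrt (N:ℝ) := by
    intro N
    induction N with
    | zero => simp
    | succ n ih =>
      rw [Finset.sum_range_succ, Finset.sum_range_succ, ih]
      push_cast
      ring
  -- bound for the sum of differences
  have hsumdiff : ∀ N : ℕ, ∑ q ∈ Finset.range N,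
      a ^ q * (Real.sqrt ((q:ℝ)+1) - Real.sqrt (q:ℝ))
      ≤ 1 + Real.sqrt Real.pi / (2 * Real.sqrt b) := by
    intro N
    have hRpos : 0 ≤ Real.sqrt Real.pi / (2 * Real.sqrt b) := by positivity
    match N with
    | 0 => simpa using by linarith
    | Nat.succ n =>
      rw [Finset.sum_range_succ']
      have h0term : a ^ 0 * (Real.sqrt ((0:ℕ):ℝ)+1-1) = 0 := by norm_num
      have hfirst : a ^ (0:ℕ) * (Real.sqrt (((0:ℕ):ℝ)+1) - Real.sqrt ((0:ℕ):ℝ)) = 1 := by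
        norm_num
      rw [hfirst]
      have hsum2 : ∑ i ∈ Finset.range n,
          a ^ (i+1) * (Real.sqrt (((i+1:ℕ):ℝ)+1) - Real.sqrt ((i+1:ℕ):ℝ))
          ≤ Real.sqrt Real.pi / (2 * Real.sqrt b) := by
        have hle : ∑ i ∈ Finset.range n,
            a ^ (i+1) * (Real.sqrt (((i+1:ℕ):ℝ)+1) - Real.sqrt ((i+1:ℕ):ℝ))
            ≤ ∑ i ∈ Finset.range n, (∫ x in (i:ℝ)..((i:ℝ)+1), f x) / 2 := by
          refine Finset.sum_le_sum fun i _ => ?_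
          have := hterm i
          push_cast
          push_cast at this
          exact this
        have hadj : ∑ i ∈ Finset.range n, ∫ x in ((i:ℕ):ℝ)..(((i+1:ℕ)):ℝ), f x
            = ∫ x in ((0:ℕ):ℝ)..((n:ℕ):ℝ), f x := by
          apply intervalIntegral.sum_integral_adjacent_intervals
          intro k _
          exact hInt _ _ (Nat.cast_nonneg k) (Nat.cast_nonneg (k+1))
        simp only [Nat.cast_zero] at hadj
        have hcast : ∑ i ∈ Finset.range n, (∫ x in (i:ℝ)..((i:ℝ)+1), f x) / 2
            = (∫ x in (0:ℝ)..(n:ℝ), f x) / 2 := by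
          rw [← Finset.sum_div]
          congr 1
          rw [← hadj]
          refine Finset.sum_congr rfl fun i _ => ?_
          push_cast
          ring_nf
        rw [hcast] at hle
        refine le_trans hle ?_
        have hint_le : ∫ x in (0:ℝ)..(n:ℝ), f x ≤ ∫ x in Ioi (0:ℝ), f x := by
          rw [intervalIntegral.integral_of_le (Nat.cast_nonneg n)]
          refine setIntegral_mono_set hIoi ?_ (HasSubset.Subset.eventuallyLE Ioc_subset_Ioi_self)
          filter_upwards [ae_restrict_mem measurableSet_Ioi] with x hx
          exact hfnn x (le_of_lt hx)
        rw [hI] at hint_le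
        rw [div_le_div_iff₀ (by norm_num) (by positivity)]
        rw [le_div_iff₀ hsb] at hint_le
        nlinarith [Real.sqrt_nonneg Real.pi, hsb]
      linarith
  -- first inequality
  have hfirst : ∑ q ∈ Finset.range Q, a ^ q * Real.sqrt ((q:ℝ) + 1)
      ≤ 1 / (1 - a) * (1 + Real.sqrt Real.pi / (2 * Real.sqrt b)) := by
    have h1 := habel Q
    have h2 := hsumdiff Q
    have h3 : (1 - a) * (∑ q ∈ Finset.range Q, a ^ q * Real.sqrt ((q:ℝ)+1))
        ≤ 1 + Real.sqrt Real.pi / (2 * Real.sqrt b) := by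
      have hnn : 0 ≤ a ^ Q * Real.sqrt (Q:ℝ) :=
        mul_nonneg (pow_nonneg ha0.le _) (Real.sqrt_nonneg _)
      linarith
    rw [one_div, inv_mul_eq_div, le_div_iff₀ h1a]
    linarith [mul_comm (1-a) (∑ q ∈ Finset.range Q, a ^ q * Real.sqrt ((q:ℝ)+1))]
  constructor
  · exact hfirst
  -- second inequality
  · have hlog : Real.log a ≤ a - 1 := Real.log_le_sub_one_of_pos ha0
    have h1ab : 1 - a ≤ b := by simp only [hbdef]; linarith
    have hs1a : 0 < Real.sqrt (1 - a) := Real.sqrt_pos.2 h1a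
    have hsle : Real.sqrt (1 - a) ≤ Real.sqrt b := Real.sqrt_le_sqrt h1ab
    have hsle1 : Real.sqrt (1 - a) ≤ 1 := by
      have h := Real.sqrt_le_sqrt (show 1 - a ≤ 1 by linarith)
      rwa [Real.sqrt_one] at h
    have hpi : Real.sqrt Real.pi ≤ 2 := by
      rw [show (2:ℝ) = Real.sqrt 4 by
        rw [show (4:ℝ) = 2^2 by norm_num, Real.sqrt_sq (by norm_num : (0:ℝ) ≤ 2)]]
      exact Real.sqrt_le_sqrt (by linarith [Real.pi_le_four])
    have hmid : Real.sqrt Real.pi / (2 * Real.sqrt b) ≤ 1 / Real.sqrt (1 - a) := by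
      rw [div_le_div_iff₀ (by positivity) hs1a]
      nlinarith [Real.sqrt_nonneg Real.pi]
    have hone : 1 ≤ 1 / Real.sqrt (1 - a) := by
      rw [le_div_iff₀ hs1a]; linarith
    have hpow32 : (1 - a) ^ ((3:ℝ)/2) = (1 - a) * Real.sqrt (1 - a) := by
      rw [show (3:ℝ)/2 = 1 + 1/2 by norm_num, Real.rpow_add h1a, Real.rpow_one,
        ← Real.sqrt_eq_rpow]
    rw [hpow32]
    have step : 1 + Real.sqrt Real.pi / (2 * Real.sqrt b) ≤ 2 / Real.sqrt (1 - a) := by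
      have : (2:ℝ) / Real.sqrt (1-a) = 1 / Real.sqrt (1-a) + 1 / Real.sqrt (1-a) := by ring
      rw [this]
      linarith
    calc 1 / (1 - a) * (1 + Real.sqrt Real.pi / (2 * Real.sqrt b))
        ≤ 1 / (1 - a) * (2 / Real.sqrt (1 - a)) := by
          refine mul_le_mul_of_nonneg_left step (by positivity)
      _ = 2 / ((1 - a) * Real.sqrt (1 - a)) := by
          field_simp
end

section
/- Let $\epsilon > 0$ and let $g$ be a real random variable with $r^2 = \mathbb{E}[g^2] > 0$. Let $v \geq g^2 - \epsilon$ almost surely, $v \geq 0$, and let $G \in \mathbb{R}$ and $\tilde v \geq 0$ be deterministic with $\epsilon + \tilde v \geq r^2$. Then $\mathbb{E}\left[|Gg| \frac{g^2}{(\epsilon+v)\sqrt{\epsilon+\tilde v}}\right] \leq \frac{G^2}{4\sqrt{\epsilon+\tilde v}} + \frac{r^2}{\sqrt{\epsilon+\tilde v}} \mathbb{E}\left[\frac{g^2}{\epsilon+v}\right]$. -/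
/-!
Write `u = g² / (ε + v)`, which lies in `[0, 1]` because `g² ≤ ε + v`. The AM-GM inequality
`|G g| u ≤ G² g² / (4 r²) + r² u²` together with `u² ≤ u` bounds the integrand pointwise, and
integrating the first term against `𝔼[g²] = r²` leaves exactly `G² / 4`.
-/

open MeasureTheory

theorem mul_le_sq_div_add_mul_sq (a b : ℝ) {c : ℝ} (hc : 0 < c) :
    a * b ≤ a ^ 2 / (4 * c) + c * b ^ 2 := by
  rw [div_add' _ _ _ (by positivity), le_div_iff₀ (by positivity)]
  nlinarith [sq_nonneg (a - 2 * c * b)]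

theorem abs_mul_mul_sq_div_le {G x w s c : ℝ} (hs : 0 ≤ s) (hc : 0 < c) (hxw : x ^ 2 ≤ w) :
    |G * x| * (x ^ 2 / (w * s)) ≤ G ^ 2 / (4 * c * s) * x ^ 2 + c / s * (x ^ 2 / w) := by
  set u := x ^ 2 / w
  have hw : 0 ≤ w := (sq_nonneg x).trans hxw
  have hu_sq : u ^ 2 ≤ u := pow_le_of_le_one (div_nonneg (sq_nonneg x) hw)
    (div_le_one_of_le₀ hxw hw) two_ne_zero
  calc |G * x| * (x ^ 2 / (w * s)) = |G * x| * u / s := by ring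
    _ ≤ (|G * x| ^ 2 / (4 * c) + c * u ^ 2) / s := by
        gcongr; exact mul_le_sq_div_add_mul_sq _ _ hc
    _ ≤ (|G * x| ^ 2 / (4 * c) + c * u) / s := by gcongr
    _ = G ^ 2 / (4 * c * s) * x ^ 2 + c / s * u := by rw [sq_abs]; ring

theorem integrable_sq_div_of_sq_le {Ω : Type*} [MeasurableSpace Ω] {μ : Measure Ω}
    [IsFiniteMeasure μ] {g w : Ω → ℝ} (hg : AEMeasurable g μ) (hw : AEMeasurable w μ)
    (hgw : ∀ᵐ ω ∂μ, g ω ^ 2 ≤ w ω) :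
    Integrable (fun ω => g ω ^ 2 / w ω) μ := by
  refine (integrable_const (1 : ℝ)).mono' ((hg.pow_const 2).div hw).aestronglyMeasurable ?_
  filter_upwards [hgw] with ω h
  have hw : 0 ≤ w ω := (sq_nonneg _).trans h
  rw [Real.norm_of_nonneg (div_nonneg (sq_nonneg _) hw)]
  exact div_le_one_of_le₀ h hw

theorem rho_term_bound_general {Ω : Type*} [MeasurableSpace Ω] (μ : Measure Ω)
    [IsProbabilityMeasure μ]
    (g v : Ω → ℝ) (ε G vt : ℝ)
    (hgmeas : AEMeasurable g μ) (hvmeas : AEMeasurable v μ)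
    (hgint : Integrable (fun ω => g ω ^ 2) μ)
    (hr : 0 < ∫ ω, g ω ^ 2 ∂μ)
    (hvg : ∀ᵐ ω ∂μ, g ω ^ 2 ≤ ε + v ω) :
    ∫ ω, |G * g ω| * (g ω ^ 2 / ((ε + v ω) * Real.sqrt (ε + vt))) ∂μ
      ≤ G ^ 2 / (4 * Real.sqrt (ε + vt))
        + (∫ ω, g ω ^ 2 ∂μ) / Real.sqrt (ε + vt) * ∫ ω, g ω ^ 2 / (ε + v ω) ∂μ := by
  set s := Real.sqrt (ε + vt)
  set r2 := ∫ ω, g ω ^ 2 ∂μ with hr2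
  have hratio : Integrable (fun ω => g ω ^ 2 / (ε + v ω)) μ :=
    integrable_sq_div_of_sq_le hgmeas (aemeasurable_const.add hvmeas) hvg
  calc ∫ ω, |G * g ω| * (g ω ^ 2 / ((ε + v ω) * s)) ∂μ
      ≤ ∫ ω, G ^ 2 / (4 * r2 * s) * g ω ^ 2 + r2 / s * (g ω ^ 2 / (ε + v ω)) ∂μ := by
        refine integral_mono_of_nonneg ?_ ((hgint.const_mul _).add (hratio.const_mul _)) ?_
        · filter_upwards [hvg] with ω h
          have hw : 0 ≤ ε + v ω := (sq_nonneg _).trans h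
          exact mul_nonneg (abs_nonneg _)
            (div_nonneg (sq_nonneg _) (mul_nonneg hw (Real.sqrt_nonneg _)))
        · filter_upwards [hvg] with ω h
          exact abs_mul_mul_sq_div_le (Real.sqrt_nonneg _) hr h
    _ = G ^ 2 / (4 * s) + r2 / s * ∫ ω, g ω ^ 2 / (ε + v ω) ∂μ := by
        rw [integral_add (hgint.const_mul _) (hratio.const_mul _), integral_const_mul,
          integral_const_mul, ← hr2]
        congr 1
        field_simp

/-- Bound on the ρ term in the descent lemma of the Adam/Adagrad analysis. -/
theorem rho_term_bound {Ω : Type*} [MeasurableSpace Ω] (μ : Measure Ω)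
    [IsProbabilityMeasure μ]
    (g v : Ω → ℝ) (ε G vt : ℝ) (hε : 0 < ε) (hvt : 0 ≤ vt)
    (hgmeas : AEMeasurable g μ) (hvmeas : AEMeasurable v μ)
    (hgint : Integrable (fun ω => g ω ^ 2) μ)
    (hr : 0 < ∫ ω, g ω ^ 2 ∂μ)
    (hv0 : ∀ᵐ ω ∂μ, 0 ≤ v ω)
    (hvg : ∀ᵐ ω ∂μ, g ω ^ 2 ≤ ε + v ω)
    (hvtr : (∫ ω, g ω ^ 2 ∂μ) ≤ ε + vt) :
    ∫ ω, |G * g ω| * (g ω ^ 2 / ((ε + v ω) * Real.sqrt (ε + vt))) ∂μ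
      ≤ G ^ 2 / (4 * Real.sqrt (ε + vt))
        + (∫ ω, g ω ^ 2 ∂μ) / Real.sqrt (ε + vt) * ∫ ω, g ω ^ 2 / (ε + v ω) ∂μ :=
  rho_term_bound_general μ g v ε G vt hgmeas hvmeas hgint hr hvg
end
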